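/- Let $q\geq 0$ and for $i=0,\dots,q$ let $h_i:[-1,1]^{d_i}\to[-1,1]^{d_{i+1}}$ (with $d_{q+1}=1$) with components $h_{ij}$ satisfying $|h_{ij}(\mathbf{x})-h_{ij}(\mathbf{y})| \leq \eta_i + K|\mathbf{x}-\mathbf{y}|_\infty^{\beta_i\wedge 1}$ for all $\mathbf{x},\mathbf{y}$, where $K\geq 1$, $\eta_i\geq 0$, $\beta_i>0$. Then for any functions $\widetilde h_i:[-1,1]^{d_i}\to[-1,1]^{d_{i+1}}$, $\| h_q\circ\cdots\circ h_0 - \widetilde h_q\circ\cdots\circ\widetilde h_0\|_{L^\infty([-1,1]^{d_0})} \leq K^q\sum_{i=0}^q\big(\eta_i^{\alpha_i} + \||h_i-\widetilde h_i|_\infty\|_\infty^{\alpha_i}\big)$, where $\alpha_i = \prod_{\ell=i+1}^q(\beta_\ell\wedge 1)$. -/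
import Mathlib


open Finset

/-- The cube `[-1,1]^d` in `ℝ^d`. -/
def cube (d : ℕ) : Set (Fin d → ℝ) := {x | ∀ i, x i ∈ Set.Icc (-1 : ℝ) 1}

/-- Iterated composition `h_n ∘ ⋯ ∘ h_0` of a chain of maps `h_i : ℝ^{d_i} → ℝ^{d_{i+1}}`. -/
def iterComp {d : ℕ → ℕ} (h : ∀ i : ℕ, (Fin (d i) → ℝ) → (Fin (d (i + 1)) → ℝ)) :
    (n : ℕ) → (Fin (d 0) → ℝ) → (Fin (d (n + 1)) → ℝ)
  | 0 => h 0
  | n + 1 => fun x => h (n + 1) (iterComp h n x)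

lemma zero_mem_cube (d : ℕ) : (fun _ => (0:ℝ)) ∈ cube d := fun _ => by
  constructor <;> norm_num

lemma norm_le_one_of_mem_cube {n : ℕ} {a : Fin n → ℝ} (ha : a ∈ cube n) : ‖a‖ ≤ 1 := by
  rw [pi_norm_le_iff_of_nonneg zero_le_one]
  intro i
  rw [Real.norm_eq_abs, abs_le]
  exact ⟨(ha i).1, (ha i).2⟩

lemma norm_sub_le_two_cube {n : ℕ} {a b : Fin n → ℝ} (ha : a ∈ cube n) (hb : b ∈ cube n) :
    ‖a - b‖ ≤ 2 := by
  calc ‖a - b‖ ≤ ‖a‖ + ‖b‖ := norm_sub_le _ _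
    _ ≤ 2 := by linarith [norm_le_one_of_mem_cube ha, norm_le_one_of_mem_cube hb]

lemma my_rpow_add_le {a b p : ℝ} (ha : 0 ≤ a) (hb : 0 ≤ b) (hp : 0 ≤ p) (hp1 : p ≤ 1) :
    (a + b) ^ p ≤ a ^ p + b ^ p := by
  have h := NNReal.rpow_add_le_add_rpow a.toNNReal b.toNNReal hp hp1
  calc (a + b) ^ p = (((a.toNNReal + b.toNNReal : NNReal)) : ℝ) ^ p := by
        rw [NNReal.coe_add, Real.coe_toNNReal _ ha, Real.coe_toNNReal _ hb]
    _ = ((((a.toNNReal + b.toNNReal) ^ p : NNReal)) : ℝ) := by rw [NNReal.coe_rpow]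
    _ ≤ (((a.toNNReal ^ p + b.toNNReal ^ p : NNReal)) : ℝ) := NNReal.coe_le_coe.2 h
    _ = a ^ p + b ^ p := by
        rw [NNReal.coe_add, NNReal.coe_rpow, NNReal.coe_rpow,
          Real.coe_toNNReal _ ha, Real.coe_toNNReal _ hb]

lemma my_rpow_sum_le {ι : Type*} (s : Finset ι) (f : ι → ℝ) (hf : ∀ i ∈ s, 0 ≤ f i)
    {p : ℝ} (hp : 0 < p) (hp1 : p ≤ 1) :
    (∑ i ∈ s, f i) ^ p ≤ ∑ i ∈ s, f i ^ p := by
  induction s using Finset.cons_induction with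
  | empty => simp [Real.zero_rpow hp.ne']
  | cons a s has ih =>
    rw [Finset.sum_cons, Finset.sum_cons]
    have hfa := hf a (Finset.mem_cons_self a s)
    have hfs : ∀ i ∈ s, 0 ≤ f i := fun i hi => hf i (Finset.mem_cons_of_mem hi)
    calc (f a + ∑ i ∈ s, f i) ^ p ≤ f a ^ p + (∑ i ∈ s, f i) ^ p :=
          my_rpow_add_le hfa (Finset.sum_nonneg hfs) hp.le hp1
      _ ≤ f a ^ p + ∑ i ∈ s, f i ^ p := by linarith [ih hfs]

lemma iterComp_mem {d : ℕ → ℕ} (h : ∀ i : ℕ, (Fin (d i) → ℝ) → (Fin (d (i + 1)) → ℝ))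
    (q : ℕ) (hmap : ∀ i ≤ q, ∀ x ∈ cube (d i), h i x ∈ cube (d (i + 1))) :
    ∀ x ∈ cube (d 0), iterComp h q x ∈ cube (d (q + 1)) := by
  induction q with
  | zero => exact fun x hx => hmap 0 le_rfl x hx
  | succ n ih =>
    intro x hx
    exact hmap (n+1) le_rfl _ (ih (fun i hi => hmap i (hi.trans (Nat.le_succ n))) x hx)

lemma sup_le_cube {m k : ℕ} (f g : (Fin m → ℝ) → (Fin k → ℝ))
    (hf : ∀ x ∈ cube m, f x ∈ cube k) (hg : ∀ x ∈ cube m, g x ∈ cube k) :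
    ∀ y ∈ cube m, ‖f y - g y‖ ≤ ⨆ y : cube m, ‖f y - g y‖ := by
  have hbdd : BddAbove (Set.range fun y : cube m => ‖f y - g y‖) := by
    refine ⟨2, ?_⟩
    rintro r ⟨y, rfl⟩
    exact norm_sub_le_two_cube (hf y y.2) (hg y y.2)
  intro y hy
  exact le_ciSup hbdd (⟨y, hy⟩ : cube m)

lemma sup_nonneg_cube {m k : ℕ} (f g : (Fin m → ℝ) → (Fin k → ℝ))
    (hf : ∀ x ∈ cube m, f x ∈ cube k) (hg : ∀ x ∈ cube m, g x ∈ cube k) :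
    0 ≤ ⨆ y : cube m, ‖f y - g y‖ :=
  le_trans (norm_nonneg _) (sup_le_cube f g hf hg _ (zero_mem_cube m))

theorem comp_key (q : ℕ) (d : ℕ → ℕ)
    (K : ℝ) (hK : 1 ≤ K) (η β : ℕ → ℝ)
    (hη : ∀ i ≤ q, 0 ≤ η i) (hβ : ∀ i ≤ q, 0 < β i)
    (h htil : ∀ i : ℕ, (Fin (d i) → ℝ) → (Fin (d (i + 1)) → ℝ))
    (hmap : ∀ i ≤ q, ∀ x ∈ cube (d i), h i x ∈ cube (d (i + 1)))
    (htilmap : ∀ i ≤ q, ∀ x ∈ cube (d i), htil i x ∈ cube (d (i + 1)))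
    (hHolder : ∀ i ≤ q, ∀ x ∈ cube (d i), ∀ y ∈ cube (d i), ∀ j,
      |h i x j - h i y j| ≤ η i + K * ‖x - y‖ ^ min (β i) 1) :
    ∀ x ∈ cube (d 0),
      ‖iterComp h q x - iterComp htil q x‖ ≤
        K ^ q * ∑ i ∈ Finset.range (q + 1),
          (η i ^ (∏ ℓ ∈ Finset.Ioc i q, min (β ℓ) 1) +
            (⨆ y : cube (d i), ‖h i y - htil i y‖) ^ (∏ ℓ ∈ Finset.Ioc i q, min (β ℓ) 1)) := by
  have hK0 : (0:ℝ) ≤ K := le_trans zero_le_one hK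
  induction q with
  | zero =>
    intro x hx
    have h1 := sup_le_cube (h 0) (htil 0) (hmap 0 le_rfl) (htilmap 0 le_rfl) x hx
    have h2 := hη 0 le_rfl
    show ‖h 0 x - htil 0 x‖ ≤ _
    simp only [pow_zero, one_mul, zero_add, Finset.range_one, Finset.sum_singleton,
      Finset.Ioc_self, Finset.prod_empty, Real.rpow_one]
    linarith
  | succ n ih =>
    intro x hx
    set γ := min (β (n+1)) 1 with hγdef
    have hγ0 : 0 < γ := lt_min (hβ (n+1) le_rfl) one_pos
    have hγ1 : γ ≤ 1 := min_le_right _ _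
    have hη' : ∀ i ≤ n, 0 ≤ η i := fun i hi => hη i (hi.trans (Nat.le_succ n))
    have hβ' : ∀ i ≤ n, 0 < β i := fun i hi => hβ i (hi.trans (Nat.le_succ n))
    have hmap' : ∀ i ≤ n, ∀ x ∈ cube (d i), h i x ∈ cube (d (i + 1)) :=
      fun i hi => hmap i (hi.trans (Nat.le_succ n))
    have htilmap' : ∀ i ≤ n, ∀ x ∈ cube (d i), htil i x ∈ cube (d (i + 1)) :=
      fun i hi => htilmap i (hi.trans (Nat.le_succ n))
    have hHolder' : ∀ i ≤ n, ∀ x ∈ cube (d i), ∀ y ∈ cube (d i), ∀ j,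
        |h i x j - h i y j| ≤ η i + K * ‖x - y‖ ^ min (β i) 1 :=
      fun i hi => hHolder i (hi.trans (Nat.le_succ n))
    have IH := ih hη' hβ' hmap' htilmap' hHolder' x hx
    set D : ℕ → ℝ := fun i => ⨆ y : cube (d i), ‖h i y - htil i y‖ with hDdef
    set α : ℕ → ℝ := fun i => ∏ ℓ ∈ Finset.Ioc i n, min (β ℓ) 1 with hαdef
    have hDnn : ∀ i ≤ n + 1, 0 ≤ D i :=
      fun i hi => sup_nonneg_cube _ _ (hmap i hi) (htilmap i hi)
    set S : ℝ := ∑ i ∈ Finset.range (n + 1), (η i ^ α i + D i ^ α i) with hSdef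
    set T : ℝ := ∑ i ∈ Finset.range (n + 1), (η i ^ (α i * γ) + D i ^ (α i * γ)) with hTdef
    have hterm_nn : ∀ i ∈ Finset.range (n + 1), 0 ≤ η i ^ α i + D i ^ α i := by
      intro i hi
      exact add_nonneg (Real.rpow_nonneg (hη' i (Nat.lt_succ_iff.mp (Finset.mem_range.mp hi))) _)
        (Real.rpow_nonneg (hDnn i ((Nat.lt_succ_iff.mp (Finset.mem_range.mp hi)).trans (Nat.le_succ n))) _)
    have hSnn : 0 ≤ S := Finset.sum_nonneg hterm_nn
    have hTnn : 0 ≤ T := by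
      refine Finset.sum_nonneg fun i hi => ?_
      have hi' := Nat.lt_succ_iff.mp (Finset.mem_range.mp hi)
      exact add_nonneg (Real.rpow_nonneg (hη' i hi') _)
        (Real.rpow_nonneg (hDnn i (hi'.trans (Nat.le_succ n))) _)
    set F := iterComp h n x with hFdef
    set Ft := iterComp htil n x with hFtdef
    have hF : F ∈ cube (d (n + 1)) := iterComp_mem h n hmap' x hx
    have hFt : Ft ∈ cube (d (n + 1)) := iterComp_mem htil n htilmap' x hx
    -- Hölder step
    have hstep1 : ‖h (n+1) F - h (n+1) Ft‖ ≤ η (n+1) + K * ‖F - Ft‖ ^ γ := by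
      rw [pi_norm_le_iff_of_nonneg (add_nonneg (hη (n+1) le_rfl)
        (mul_nonneg hK0 (Real.rpow_nonneg (norm_nonneg _) _)))]
      intro j
      have := hHolder (n+1) le_rfl F hF Ft hFt j
      simpa [Real.norm_eq_abs] using this
    have hstep2 : ‖h (n+1) Ft - htil (n+1) Ft‖ ≤ D (n+1) :=
      sup_le_cube _ _ (hmap (n+1) le_rfl) (htilmap (n+1) le_rfl) Ft hFt
    have htri : ‖h (n+1) F - htil (n+1) Ft‖ ≤
        ‖h (n+1) F - h (n+1) Ft‖ + ‖h (n+1) Ft - htil (n+1) Ft‖ := by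
      have := norm_add_le (h (n+1) F - h (n+1) Ft) (h (n+1) Ft - htil (n+1) Ft)
      simpa using this
    -- rpow chain
    have hSγ : S ^ γ ≤ T := by
      calc S ^ γ ≤ ∑ i ∈ Finset.range (n+1), (η i ^ α i + D i ^ α i) ^ γ :=
            my_rpow_sum_le _ _ hterm_nn hγ0 hγ1
        _ ≤ T := by
            refine Finset.sum_le_sum fun i hi => ?_
            have hi' := Nat.lt_succ_iff.mp (Finset.mem_range.mp hi)
            have hηi := hη' i hi'
            have hDi := hDnn i (hi'.trans (Nat.le_succ n))
            have h1 := my_rpow_add_le (Real.rpow_nonneg hηi (α i))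
              (Real.rpow_nonneg hDi (α i)) hγ0.le hγ1
            rwa [← Real.rpow_mul hηi, ← Real.rpow_mul hDi] at h1
    have hKn1 : (1:ℝ) ≤ K ^ n := one_le_pow₀ hK
    have hchain : ‖F - Ft‖ ^ γ ≤ K ^ n * T := by
      calc ‖F - Ft‖ ^ γ ≤ (K ^ n * S) ^ γ := Real.rpow_le_rpow (norm_nonneg _) IH hγ0.le
        _ = (K ^ n) ^ γ * S ^ γ := Real.mul_rpow (pow_nonneg hK0 n) hSnn
        _ ≤ K ^ n * T := by
            have h1 : (K ^ n : ℝ) ^ γ ≤ K ^ n := by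
              calc (K ^ n : ℝ) ^ γ ≤ (K ^ n : ℝ) ^ (1:ℝ) :=
                    Real.rpow_le_rpow_of_exponent_le hKn1 hγ1
                _ = K ^ n := Real.rpow_one _
            exact mul_le_mul h1 hSγ (Real.rpow_nonneg hSnn γ) (pow_nonneg hK0 n)
    -- rewrite RHS
    have hRHS : ∑ i ∈ Finset.range (n + 1 + 1),
        (η i ^ (∏ ℓ ∈ Finset.Ioc i (n+1), min (β ℓ) 1) +
          D i ^ (∏ ℓ ∈ Finset.Ioc i (n+1), min (β ℓ) 1)) = T + (η (n+1) + D (n+1)) := by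
      rw [Finset.sum_range_succ]
      congr 1
      · refine Finset.sum_congr rfl fun i hi => ?_
        have hi' := Nat.lt_succ_iff.mp (Finset.mem_range.mp hi)
        rw [Finset.prod_Ioc_succ_top hi']
      · simp [Real.rpow_one]
    show ‖h (n+1) F - htil (n+1) Ft‖ ≤ _
    rw [hRHS]
    have hKn1' : (1:ℝ) ≤ K ^ (n+1) := one_le_pow₀ hK
    have hηD : 0 ≤ η (n+1) + D (n+1) := add_nonneg (hη (n+1) le_rfl) (hDnn (n+1) le_rfl)
    have hlast : η (n+1) + D (n+1) ≤ K ^ (n+1) * (η (n+1) + D (n+1)) :=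
      le_mul_of_one_le_left hηD hKn1'
    have hKmul : K * (K ^ n * T) = K ^ (n+1) * T := by ring
    have hKmono : K * ‖F - Ft‖ ^ γ ≤ K * (K ^ n * T) :=
      mul_le_mul_of_nonneg_left hchain hK0
    calc ‖h (n+1) F - htil (n+1) Ft‖
        ≤ ‖h (n+1) F - h (n+1) Ft‖ + ‖h (n+1) Ft - htil (n+1) Ft‖ := htri
      _ ≤ (η (n+1) + K * ‖F - Ft‖ ^ γ) + D (n+1) := add_le_add hstep1 hstep2
      _ ≤ (η (n+1) + K ^ (n+1) * T) + D (n+1) := by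
          rw [← hKmul]; linarith
      _ ≤ K ^ (n+1) * (T + (η (n+1) + D (n+1))) := by
          rw [mul_add]; linarith

/-- Composition approximation bound (Lemma 3-type result): if each component `h_{ij}`
satisfies `|h_{ij}(x) - h_{ij}(y)| ≤ ηᵢ + K|x-y|_∞^{βᵢ∧1}`, then for arbitrary maps
`h̃ᵢ` between the same cubes,
`‖h_q∘⋯∘h_0 - h̃_q∘⋯∘h̃_0‖_{L^∞([-1,1]^{d_0})} ≤ K^q ∑ᵢ (ηᵢ^{αᵢ} + ‖|hᵢ-h̃ᵢ|_∞‖_∞^{αᵢ})`,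
where `αᵢ = ∏_{ℓ=i+1}^q (βₗ ∧ 1)`. -/
theorem composition_approximation (q : ℕ) (d : ℕ → ℕ) (hd : d (q + 1) = 1)
    (K : ℝ) (hK : 1 ≤ K) (η β : ℕ → ℝ)
    (hη : ∀ i ≤ q, 0 ≤ η i) (hβ : ∀ i ≤ q, 0 < β i)
    (h htil : ∀ i : ℕ, (Fin (d i) → ℝ) → (Fin (d (i + 1)) → ℝ))
    (hmap : ∀ i ≤ q, ∀ x ∈ cube (d i), h i x ∈ cube (d (i + 1)))
    (htilmap : ∀ i ≤ q, ∀ x ∈ cube (d i), htil i x ∈ cube (d (i + 1)))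
    (hHolder : ∀ i ≤ q, ∀ x ∈ cube (d i), ∀ y ∈ cube (d i), ∀ j,
      |h i x j - h i y j| ≤ η i + K * ‖x - y‖ ^ min (β i) 1) :
    ∀ x ∈ cube (d 0),
      ‖iterComp h q x - iterComp htil q x‖ ≤
        K ^ q * ∑ i ∈ Finset.range (q + 1),
          (η i ^ (∏ ℓ ∈ Finset.Ioc i q, min (β ℓ) 1) +
            (⨆ y : cube (d i), ‖h i y - htil i y‖) ^ (∏ ℓ ∈ Finset.Ioc i q, min (β ℓ) 1)) :=
  comp_key q d K hK η β hη hβ h htil hmap htilmap hHolder
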